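/- In Cl_5, let μ₁₂ be a nonzero real number and λ₁₂₄, μ₁₃, λ₁₂₅, μ₂₃ arbitrary real numbers. Then the element x = μ₁₂ • (e₃*e₁*e₂) + λ₁₂₄ • (e₄*e₁*e₂) + μ₁₃ • (e₄*e₁*e₃) + λ₁₂₅ • (e₅*e₁*e₂) + μ₂₃ • (e₅*e₂*e₃) is a unit of Cl_5. (x is 4× the invariant Dirac operator of a metric on the nilpotent Lie algebra 𝒩₅,₃ = (0,0,12,13,23); its invertibility for every choice of parameters proves the paper's claim that 𝒩₅,₃ admits no left-invariant harmonic spinors.) -/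
import Mathlib


open scoped BigOperators

/-- The negative-definite quadratic form `Q v = -∑ i, (v i)^2` on `EuclideanSpace ℝ (Fin n)`. -/
noncomputable def Q (n : ℕ) : QuadraticForm ℝ (EuclideanSpace ℝ (Fin n)) :=
  QuadraticMap.ofPolar (fun v => -∑ i, v i ^ 2)
    (fun a v => by
      simp only [PiLp.smul_apply, smul_eq_mul, mul_pow]
      rw [← Finset.mul_sum]
      ring)
    (fun x x' y => by
      have h : ∀ (u w : EuclideanSpace ℝ (Fin n)),
          QuadraticMap.polar (fun v : EuclideanSpace ℝ (Fin n) => -∑ i, v i ^ 2) u w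
            = -(2 * ∑ i, u i * w i) := by
        intro u w
        have hsq : ∀ i, (u i + w i) ^ 2 = u i ^ 2 + w i ^ 2 + 2 * (u i * w i) := fun i => by ring
        simp_rw [QuadraticMap.polar, PiLp.add_apply, hsq, Finset.sum_add_distrib,
          ← Finset.mul_sum]
        ring
      simp_rw [h, PiLp.add_apply, add_mul, Finset.sum_add_distrib]
      ring)
    (fun a x y => by
      have h : ∀ (u w : EuclideanSpace ℝ (Fin n)),
          QuadraticMap.polar (fun v : EuclideanSpace ℝ (Fin n) => -∑ i, v i ^ 2) u w
            = -(2 * ∑ i, u i * w i) := by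
        intro u w
        have hsq : ∀ i, (u i + w i) ^ 2 = u i ^ 2 + w i ^ 2 + 2 * (u i * w i) := fun i => by ring
        simp_rw [QuadraticMap.polar, PiLp.add_apply, hsq, Finset.sum_add_distrib,
          ← Finset.mul_sum]
        ring
      simp_rw [h, PiLp.smul_apply, smul_eq_mul, mul_assoc, ← Finset.mul_sum]
      ring)

/-- The image in the Clifford algebra `Cl_n` of the `i`-th standard basis vector. -/
noncomputable def e {n : ℕ} (i : Fin n) : CliffordAlgebra (Q n) :=
  CliffordAlgebra.ι (Q n) (EuclideanSpace.single i 1)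

lemma Q_apply {n : ℕ} (v : EuclideanSpace ℝ (Fin n)) : Q n v = -∑ i, v i ^ 2 := rfl

lemma e_sq (i : Fin 5) : e i * e i = (-1 : CliffordAlgebra (Q 5)) := by
  rw [e, CliffordAlgebra.ι_sq_scalar]
  have h : (Q 5) (EuclideanSpace.single i 1) = -1 := by
    rw [Q_apply]
    simp [EuclideanSpace.single_apply, apply_ite (· ^ 2)]
  rw [h, map_neg, map_one]

lemma e_swap {i j : Fin 5} (h : i ≠ j) : e j * e i = -(e i * e j) := by
  have hp : QuadraticMap.polar (Q 5) (EuclideanSpace.single i 1) (EuclideanSpace.single j 1) = 0 := by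
    have key : ∀ k : Fin 5,
        (((EuclideanSpace.single i 1 : EuclideanSpace ℝ (Fin 5)) k
          + (EuclideanSpace.single j 1 : EuclideanSpace ℝ (Fin 5)) k)) ^ 2
        = (EuclideanSpace.single i 1 : EuclideanSpace ℝ (Fin 5)) k ^ 2
          + (EuclideanSpace.single j 1 : EuclideanSpace ℝ (Fin 5)) k ^ 2 := by
      intro k
      simp only [EuclideanSpace.single_apply]
      rcases eq_or_ne k i with rfl | hki
      · simp [h]
      · simp [hki]
    simp only [QuadraticMap.polar, Q_apply, PiLp.add_apply, key, Finset.sum_add_distrib]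
    ring
  have h2 := CliffordAlgebra.ι_mul_ι_add_swap (Q := Q 5) (EuclideanSpace.single i 1) (EuclideanSpace.single j 1)
  rw [hp, map_zero] at h2
  rw [e, e]
  exact eq_neg_of_add_eq_zero_right h2

lemma e_sq' (i : Fin 5) (t : CliffordAlgebra (Q 5)) : e i * (e i * t) = -t := by
  rw [← mul_assoc, e_sq, neg_one_mul]

lemma e_swap' {i j : Fin 5} (h : i ≠ j) (t : CliffordAlgebra (Q 5)) :
    e j * (e i * t) = -(e i * (e j * t)) := by
  rw [← mul_assoc, e_swap h, neg_mul, mul_assoc]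
lemma e10 : e (1 : Fin 5) * e 0 = -(e 0 * e (1 : Fin 5)) := e_swap (by decide)
lemma e10' (t : CliffordAlgebra (Q 5)) : e (1 : Fin 5) * (e 0 * t) = -(e 0 * (e (1 : Fin 5) * t)) := e_swap' (by decide) t
lemma e20 : e (2 : Fin 5) * e 0 = -(e 0 * e (2 : Fin 5)) := e_swap (by decide)
lemma e20' (t : CliffordAlgebra (Q 5)) : e (2 : Fin 5) * (e 0 * t) = -(e 0 * (e (2 : Fin 5) * t)) := e_swap' (by decide) t
lemma e21 : e (2 : Fin 5) * e 1 = -(e 1 * e (2 : Fin 5)) := e_swap (by decide)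
lemma e21' (t : CliffordAlgebra (Q 5)) : e (2 : Fin 5) * (e 1 * t) = -(e 1 * (e (2 : Fin 5) * t)) := e_swap' (by decide) t
lemma e30 : e (3 : Fin 5) * e 0 = -(e 0 * e (3 : Fin 5)) := e_swap (by decide)
lemma e30' (t : CliffordAlgebra (Q 5)) : e (3 : Fin 5) * (e 0 * t) = -(e 0 * (e (3 : Fin 5) * t)) := e_swap' (by decide) t
lemma e31 : e (3 : Fin 5) * e 1 = -(e 1 * e (3 : Fin 5)) := e_swap (by decide)
lemma e31' (t : CliffordAlgebra (Q 5)) : e (3 : Fin 5) * (e 1 * t) = -(e 1 * (e (3 : Fin 5) * t)) := e_swap' (by decide) t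
lemma e32 : e (3 : Fin 5) * e 2 = -(e 2 * e (3 : Fin 5)) := e_swap (by decide)
lemma e32' (t : CliffordAlgebra (Q 5)) : e (3 : Fin 5) * (e 2 * t) = -(e 2 * (e (3 : Fin 5) * t)) := e_swap' (by decide) t
lemma e40 : e (4 : Fin 5) * e 0 = -(e 0 * e (4 : Fin 5)) := e_swap (by decide)
lemma e40' (t : CliffordAlgebra (Q 5)) : e (4 : Fin 5) * (e 0 * t) = -(e 0 * (e (4 : Fin 5) * t)) := e_swap' (by decide) t
lemma e41 : e (4 : Fin 5) * e 1 = -(e 1 * e (4 : Fin 5)) := e_swap (by decide)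
lemma e41' (t : CliffordAlgebra (Q 5)) : e (4 : Fin 5) * (e 1 * t) = -(e 1 * (e (4 : Fin 5) * t)) := e_swap' (by decide) t
lemma e42 : e (4 : Fin 5) * e 2 = -(e 2 * e (4 : Fin 5)) := e_swap (by decide)
lemma e42' (t : CliffordAlgebra (Q 5)) : e (4 : Fin 5) * (e 2 * t) = -(e 2 * (e (4 : Fin 5) * t)) := e_swap' (by decide) t
lemma e43 : e (4 : Fin 5) * e 3 = -(e 3 * e (4 : Fin 5)) := e_swap (by decide)
lemma e43' (t : CliffordAlgebra (Q 5)) : e (4 : Fin 5) * (e 3 * t) = -(e 3 * (e (4 : Fin 5) * t)) := e_swap' (by decide) t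

/-- **The `𝒩₅,₃` case.** In `Cl₅`, with `μ₁₂ ≠ 0`, the element
`x = μ₁₂ • (e₃e₁e₂) + λ₁₂₄ • (e₄e₁e₂) + μ₁₃ • (e₄e₁e₃) + λ₁₂₅ • (e₅e₁e₂) + μ₂₃ • (e₅e₂e₃)`
is always a unit: `𝒩₅,₃` admits no left-invariant harmonic spinors. -/
theorem clifford_N53_dirac (μ₁₂ lam₁₂₄ μ₁₃ lam₁₂₅ μ₂₃ : ℝ) (hμ₁₂ : μ₁₂ ≠ 0)
    (x : CliffordAlgebra (Q 5))
    (hx : x = μ₁₂ • (e (2 : Fin 5) * e 0 * e 1) + lam₁₂₄ • (e (3 : Fin 5) * e 0 * e 1)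
        + μ₁₃ • (e (3 : Fin 5) * e 0 * e 2) + lam₁₂₅ • (e (4 : Fin 5) * e 0 * e 1)
        + μ₂₃ • (e (4 : Fin 5) * e 1 * e 2)) :
    IsUnit x := by
  set S : ℝ := μ₁₂^2 + lam₁₂₄^2 + μ₁₃^2 + lam₁₂₅^2 + μ₂₃^2 with hS
  set c : ℝ := 4*(lam₁₂₄^2*μ₂₃^2 + μ₁₃^2*lam₁₂₅^2 + μ₁₃^2*μ₂₃^2) with hc
  set V : CliffordAlgebra (Q 5) :=
      (-(2*lam₁₂₄*μ₂₃)) • (e 0 * (e 2 * (e 3 * e 4)))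
      + (-(2*μ₁₃*lam₁₂₅)) • (e 1 * (e 2 * (e 3 * e 4)))
      + (2*μ₁₃*μ₂₃) • (e 0 * (e 1 * (e 3 * e 4))) with hV
  have hx2 : x * x = S • (1 : CliffordAlgebra (Q 5)) + V := by
    rw [hx, hV, hS]
    simp only [add_mul, mul_add, smul_mul_assoc, mul_smul_comm, smul_smul, mul_assoc]
    simp only [e10, e10', e20, e20', e21, e21', e30, e30', e31, e31', e32, e32', e40, e40',
      e41, e41', e42, e42', e43, e43', e_sq, e_sq', mul_neg, neg_neg, smul_neg, mul_one]
    module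
  have hV2 : V * V = c • (1 : CliffordAlgebra (Q 5)) := by
    rw [hV, hc]
    simp only [add_mul, mul_add, smul_mul_assoc, mul_smul_comm, smul_smul, mul_assoc]
    simp only [e10, e10', e20, e20', e21, e21', e30, e30', e31, e31', e32, e32', e40, e40',
      e41, e41', e42, e42', e43, e43', e_sq, e_sq', mul_neg, neg_neg, smul_neg, mul_one]
    module
  set y : CliffordAlgebra (Q 5) := (2*S) • x - x * (x * x) with hy
  have h4 : x * (x * (x * x)) = (S • (1:CliffordAlgebra (Q 5)) + V) * (S • 1 + V) := by
    rw [← mul_assoc, hx2]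
  have hexp : (S • (1:CliffordAlgebra (Q 5)) + V) * (S • 1 + V)
      = (S^2 + c) • (1:CliffordAlgebra (Q 5)) + (2*S) • V := by
    simp only [add_mul, mul_add, smul_mul_assoc, mul_smul_comm, smul_smul, hV2, mul_one, one_mul]
    module
  have hxy : x * y = (S^2 - c) • (1 : CliffordAlgebra (Q 5)) := by
    rw [hy, mul_sub, mul_smul_comm, h4, hexp, hx2]
    module
  have hyx : y * x = (S^2 - c) • (1 : CliffordAlgebra (Q 5)) := by
    have h4' : (x * (x * x)) * x = (S • (1:CliffordAlgebra (Q 5)) + V) * (S • 1 + V) := by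
      rw [mul_assoc, mul_assoc, ← mul_assoc x x (x*x), hx2]
    rw [hy, sub_mul, smul_mul_assoc, h4', hexp, hx2]
    module
  have hm : (0:ℝ) < μ₁₂^2 := by positivity
  have hne : S^2 - c ≠ 0 := by
    have : 0 < S^2 - c := by
      rw [hS, hc]
      nlinarith [sq_nonneg (lam₁₂₄^2 + μ₁₃^2 - lam₁₂₅^2 - μ₂₃^2),
        mul_nonneg (sq_nonneg lam₁₂₄) (sq_nonneg lam₁₂₅), sq_nonneg μ₁₂,
        mul_nonneg hm.le (add_nonneg (add_nonneg (add_nonneg (sq_nonneg lam₁₂₄) (sq_nonneg μ₁₃)) (sq_nonneg lam₁₂₅)) (sq_nonneg μ₂₃)),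
        sq_nonneg (μ₁₂^2)]
    linarith
  refine isUnit_iff_exists.mpr ⟨(S^2 - c)⁻¹ • y, ?_, ?_⟩
  · rw [mul_smul_comm, hxy, smul_smul, inv_mul_cancel₀ hne, one_smul]
  · rw [smul_mul_assoc, hyx, smul_smul, inv_mul_cancel₀ hne, one_smul]
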